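/- arXiv:2103.04168 — 5 statements merged into one kernel-verified Lean document; each statement's English description precedes it below -/
import Mathlib

section
/- Let $f_1, f_2 : \mathbb{R}^4 \to \mathbb{R}$ be continuous with $|f_i(x)| \le C\langle x\rangle^{-2}$, let $v_1 \ne v_2 \in \mathbb{R}^4$, and let $0 < \alpha_1 \le \alpha_2$ with $\alpha_1 + \alpha_2 > 2$ and $\alpha_2 > 2$. Then there exist $T_0, C' > 0$ such that for all $t \ge T_0$, $\int_{\mathbb{R}^4} |f_1(x - v_1 t)|^{\alpha_1} |f_2(x - v_2 t)|^{\alpha_2} \, dx \le C' t^{-2\alpha_1}$. -/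
noncomputable section

open MeasureTheory

abbrev E4 := EuclideanSpace ℝ (Fin 4)

/-!
The centres `t • v1` and `t • v2` are `t ‖v1 - v2‖` apart, so at every point `x` one of
`⟨x - t • v1⟩`, `⟨x - t • v2⟩` is at least `t ‖v1 - v2‖ / 2`. If it is the first, its factor
`⟨x - t • v1⟩ ^ (-2 α1)` is `O(t ^ (-2 α1))`; if it is the second, then, the first bracket
being the smaller one and `α1 ≤ α2`, the two decay rates can be exchanged:
`⟨x - t • v1⟩ ^ (-2 α1) ⟨x - t • v2⟩ ^ (-2 α2) ≤ ⟨x - t • v2⟩ ^ (-2 α1) ⟨x - t • v1⟩ ^ (-2 α2)`.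
In both cases what is left is `⟨x - t • vᵢ⟩ ^ (-2 α2)`, whose integral over `ℝ⁴` is finite
since `2 α2 > 4` and independent of `t` by translation invariance.
-/

lemma rpow_le_mul_rpow_neg_of_le {a C s β α : ℝ} (ha : 0 ≤ a) (hs : 0 < s) (hα : 0 ≤ α)
    (h : a ≤ C * s ^ (-β)) : a ^ α ≤ C ^ α * s ^ (-(β * α)) := by
  have hC : 0 ≤ C := nonneg_of_mul_nonneg_left (ha.trans h) (Real.rpow_pos_of_pos hs _)
  calc a ^ α ≤ (C * s ^ (-β)) ^ α := Real.rpow_le_rpow ha h hα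
    _ = C ^ α * s ^ (-(β * α)) := by
      rw [Real.mul_rpow hC (Real.rpow_nonneg hs.le _), ← Real.rpow_mul hs.le, neg_mul]

lemma rpow_neg_mul_rpow_neg_le {P Q p q : ℝ} (hP : 0 < P) (hQ : 0 < Q) (hpq : p ≤ q) :
    P ^ (-p) * Q ^ (-q) ≤ max P Q ^ (-p) * (P ^ (-q) + Q ^ (-q)) := by
  rcases le_total P Q with hPQ | hQP
  · have hswap : Q ^ (-(q - p)) ≤ P ^ (-(q - p)) :=
      Real.rpow_le_rpow_of_nonpos hP hPQ (by linarith)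
    calc P ^ (-p) * Q ^ (-q) = P ^ (-p) * Q ^ (-(q - p)) * Q ^ (-p) := by
          rw [mul_assoc, ← Real.rpow_add hQ]; ring_nf
      _ ≤ P ^ (-p) * P ^ (-(q - p)) * Q ^ (-p) := by gcongr
      _ = Q ^ (-p) * P ^ (-q) := by
          rw [← Real.rpow_add hP]; ring_nf
      _ ≤ max P Q ^ (-p) * (P ^ (-q) + Q ^ (-q)) := by
          rw [max_eq_right hPQ]
          gcongr
          exact le_add_of_nonneg_right (by positivity)
  · rw [max_eq_left hQP]
    gcongr
    exact le_add_of_nonneg_left (by positivity)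

section JapaneseBracket

variable {E : Type*} [NormedAddCommGroup E]

def japaneseBracket (x : E) : ℝ := √(1 + ‖x‖ ^ 2)

lemma japaneseBracket_pos (x : E) : 0 < japaneseBracket x :=
  Real.sqrt_pos.mpr (by positivity)

lemma norm_le_japaneseBracket (x : E) : ‖x‖ ≤ japaneseBracket x :=
  Real.le_sqrt_of_sq_le (by linarith)

lemma norm_sub_le_two_mul_max_japaneseBracket (a b x : E) :
    ‖a - b‖ ≤ 2 * max (japaneseBracket (x - a)) (japaneseBracket (x - b)) := by
  have := norm_sub_le_norm_sub_add_norm_sub a x b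
  rw [norm_sub_rev a x] at this
  linarith [norm_le_japaneseBracket (x - a), norm_le_japaneseBracket (x - b),
    le_max_left (japaneseBracket (x - a)) (japaneseBracket (x - b)),
    le_max_right (japaneseBracket (x - a)) (japaneseBracket (x - b))]

lemma japaneseBracket_rpow_neg_mul_le {a b : E} {p q : ℝ} (hab : a ≠ b) (hp : 0 ≤ p)
    (hpq : p ≤ q) (x : E) :
    japaneseBracket (x - a) ^ (-p) * japaneseBracket (x - b) ^ (-q) ≤
      (‖a - b‖ / 2) ^ (-p) *
        (japaneseBracket (x - a) ^ (-q) + japaneseBracket (x - b) ^ (-q)) := by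
  have hM : 0 < ‖a - b‖ / 2 := by simpa [sub_eq_zero] using hab
  refine (rpow_neg_mul_rpow_neg_le (japaneseBracket_pos _) (japaneseBracket_pos _) hpq).trans ?_
  refine mul_le_mul_of_nonneg_right (Real.rpow_le_rpow_of_nonpos hM ?_ (by linarith))
    (add_nonneg (Real.rpow_nonneg (japaneseBracket_pos _).le _)
      (Real.rpow_nonneg (japaneseBracket_pos _).le _))
  linarith [norm_sub_le_two_mul_max_japaneseBracket a b x]

variable [NormedSpace ℝ E] [FiniteDimensional ℝ E] [MeasurableSpace E] [BorelSpace E]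
  {μ : Measure E} [μ.IsAddHaarMeasure]

lemma integrable_japaneseBracket_rpow_neg {r : ℝ} (hr : (Module.finrank ℝ E : ℝ) < r) :
    Integrable (fun x : E ↦ japaneseBracket x ^ (-r)) μ := by
  refine (integrable_rpow_neg_one_add_norm_sq hr).congr (.of_forall fun x ↦ ?_)
  simp only [japaneseBracket]
  rw [Real.sqrt_eq_rpow, ← Real.rpow_mul (by positivity)]
  ring_nf

lemma integral_le_of_le_japaneseBracket_rpow_mul {F : E → ℝ} {a b : E} {K p q : ℝ}
    (hab : a ≠ b) (hp : 0 ≤ p) (hpq : p ≤ q) (hq : (Module.finrank ℝ E : ℝ) < q)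
    (hF₀ : ∀ x, 0 ≤ F x)
    (hF : ∀ x, F x ≤ K * (japaneseBracket (x - a) ^ (-p) * japaneseBracket (x - b) ^ (-q))) :
    ∫ x, F x ∂μ ≤ K * (‖a - b‖ / 2) ^ (-p) * (2 * ∫ x, japaneseBracket x ^ (-q) ∂μ) := by
  have hK : 0 ≤ K := nonneg_of_mul_nonneg_left ((hF₀ a).trans (hF a))
    (mul_pos (Real.rpow_pos_of_pos (japaneseBracket_pos _) _)
      (Real.rpow_pos_of_pos (japaneseBracket_pos _) _))
  have hint := integrable_japaneseBracket_rpow_neg (μ := μ) hq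
  have hinta := hint.comp_sub_right a
  have hintb := hint.comp_sub_right b
  calc ∫ x, F x ∂μ
      ≤ ∫ x, K * (‖a - b‖ / 2) ^ (-p) *
          (japaneseBracket (x - a) ^ (-q) + japaneseBracket (x - b) ^ (-q)) ∂μ := by
        refine integral_mono_of_nonneg (.of_forall hF₀) ((hinta.add hintb).const_mul _)
          (.of_forall fun x ↦ (hF x).trans ?_)
        exact (mul_le_mul_of_nonneg_left (japaneseBracket_rpow_neg_mul_le hab hp hpq x) hK).trans_eq
          (mul_assoc _ _ _).symm
    _ = K * (‖a - b‖ / 2) ^ (-p) * (2 * ∫ x, japaneseBracket x ^ (-q) ∂μ) := by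
        rw [integral_const_mul, integral_add hinta hintb,
          integral_sub_right_eq_self (fun x ↦ japaneseBracket x ^ (-q)),
          integral_sub_right_eq_self (fun x ↦ japaneseBracket x ^ (-q))]
        ring

end JapaneseBracket

theorem interaction_estimate_case_one_general (f1 f2 : E4 → ℝ)
    (C : ℝ)
    (hC : ∀ x : E4, |f1 x| ≤ C * Real.sqrt (1 + ‖x‖ ^ 2) ^ (-2 : ℤ)
      ∧ |f2 x| ≤ C * Real.sqrt (1 + ‖x‖ ^ 2) ^ (-2 : ℤ))
    (v1 v2 : E4) (hv : v1 ≠ v2)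
    (α1 α2 : ℝ) (hα1 : 0 < α1) (hα12 : α1 ≤ α2) (hα2 : 2 < α2) :
    ∃ T0 > 0, ∃ C' > 0, ∀ t ≥ T0,
      (∫ x : E4, |f1 (x - t • v1)| ^ α1 * |f2 (x - t • v2)| ^ α2)
        ≤ C' * t ^ (-(2 * α1)) := by
  have hdecay {g : E4 → ℝ} {α : ℝ} (hα : 0 ≤ α)
      (hg : ∀ y, |g y| ≤ C * Real.sqrt (1 + ‖y‖ ^ 2) ^ (-2 : ℤ)) (y : E4) :
      |g y| ^ α ≤ C ^ α * japaneseBracket y ^ (-(2 * α)) :=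
    rpow_le_mul_rpow_neg_of_le (abs_nonneg _) (japaneseBracket_pos y) hα <| by
      have h := hg y
      rw [← Real.rpow_intCast] at h
      push_cast at h
      exact h
  set K := C ^ α1 * C ^ α2
  set I := ∫ x : E4, japaneseBracket x ^ (-(2 * α2))
  have hC₀ : 0 ≤ C := (abs_nonneg _).trans ((hC 0).1.trans (by simp))
  have hK : 0 ≤ K := by positivity
  have hI : 0 ≤ I := integral_nonneg fun x ↦ (Real.rpow_pos_of_pos (japaneseBracket_pos x) _).le
  refine ⟨1, one_pos, K * (‖v1 - v2‖ / 2) ^ (-(2 * α1)) * (2 * I) + 1, by positivity,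
    fun t ht ↦ ?_⟩
  have ht₀ : 0 < t := one_pos.trans_le ht
  have hdist : ‖t • v1 - t • v2‖ / 2 = t * (‖v1 - v2‖ / 2) := by
    rw [← smul_sub, norm_smul, Real.norm_of_nonneg ht₀.le, mul_div_assoc]
  have hprod (x : E4) : |f1 (x - t • v1)| ^ α1 * |f2 (x - t • v2)| ^ α2 ≤
      K * (japaneseBracket (x - t • v1) ^ (-(2 * α1)) *
        japaneseBracket (x - t • v2) ^ (-(2 * α2))) :=
    (mul_le_mul (hdecay hα1.le (fun y ↦ (hC y).1) _) (hdecay (by linarith) (fun y ↦ (hC y).2) _)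
      (by positivity)
      (mul_nonneg (by positivity) (Real.rpow_nonneg (japaneseBracket_pos _).le _))).trans_eq
      (by ring)
  have hmain := integral_le_of_le_japaneseBracket_rpow_mul (μ := volume)
    (smul_right_injective E4 ht₀.ne' |>.ne hv) (by positivity) (by linarith)
    (by simp only [finrank_euclideanSpace_fin]; push_cast; linarith) (fun x ↦ by positivity) hprod
  rw [hdist, Real.mul_rpow ht₀.le (by positivity)] at hmain
  calc _ ≤ K * (‖v1 - v2‖ / 2) ^ (-(2 * α1)) * (2 * I) * t ^ (-(2 * α1)) := hmain.trans_eq (by ring)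
    _ ≤ _ := by gcongr; linarith

/-- Interaction estimate between two translated algebraically decaying profiles,
case `α₂ > 2`: the integral is `O(t^{-2α₁})`. -/
theorem interaction_estimate_case_one (f1 f2 : E4 → ℝ)
    (hf1 : Continuous f1) (hf2 : Continuous f2) (C : ℝ)
    (hC : ∀ x : E4, |f1 x| ≤ C * Real.sqrt (1 + ‖x‖ ^ 2) ^ (-2 : ℤ)
      ∧ |f2 x| ≤ C * Real.sqrt (1 + ‖x‖ ^ 2) ^ (-2 : ℤ))
    (v1 v2 : E4) (hv : v1 ≠ v2)
    (α1 α2 : ℝ) (hα1 : 0 < α1) (hα12 : α1 ≤ α2) (hsum : 2 < α1 + α2) (hα2 : 2 < α2) :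
    ∃ T0 > 0, ∃ C' > 0, ∀ t ≥ T0,
      (∫ x : E4, |f1 (x - t • v1)| ^ α1 * |f2 (x - t • v2)| ^ α2)
        ≤ C' * t ^ (-(2 * α1)) :=
  interaction_estimate_case_one_general f1 f2 C hC v1 v2 hv α1 α2 hα1 hα12 hα2
end
end

section
/- Let $f_1, f_2 : \mathbb{R}^4 \to \mathbb{R}$ be continuous with $|f_i(x)| \le C\langle x\rangle^{-2}$, let $v_1 \ne v_2 \in \mathbb{R}^4$, and let $0 < \alpha_1 \le \alpha_2 < 2$ with $\alpha_1 + \alpha_2 > 2$. Then there exist $T_0, C' > 0$ such that for all $t \ge T_0$, $\int_{\mathbb{R}^4} |f_1(x - v_1 t)|^{\alpha_1} |f_2(x - v_2 t)|^{\alpha_2} \, dx \le C' t^{4 - 2(\alpha_1+\alpha_2)}$. -/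
noncomputable section

open MeasureTheory

/-!
Since `⟨y⟩⁻² ≤ ‖y‖⁻²`, the integrand is bounded by
`C^(α₁ + α₂) ‖x - t v₁‖^(-2α₁) ‖x - t v₂‖^(-2α₂)`, and the substitution `x = t y` shows that the
integral of this bound is exactly `t^(4 - 2(α₁ + α₂))` times its value at `t = 1`. That value is
finite: near `vᵢ` the singularity `‖x - vᵢ‖^(-2αᵢ)` is integrable because `2αᵢ < 4`, and away from
both points the product decays like `‖x‖^(-2(α₁ + α₂))` with `2(α₁ + α₂) > 4`.
-/

open Metric Module

lemma rpow_neg_le_one_add_inv_rpow_mul {r u s : ℝ} (hr : 0 < r) (hru : r ≤ u) (hs : 0 ≤ s) :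
    u ^ (-s) ≤ (1 + r⁻¹) ^ s * (1 + u) ^ (-s) := by
  have hu : 0 < u := hr.trans_le hru
  calc u ^ (-s) = (1 + u⁻¹) ^ s * (1 + u) ^ (-s) := by
        rw [show 1 + u⁻¹ = (1 + u) * u⁻¹ by field_simp; ring, Real.mul_rpow (by positivity)
          (by positivity), Real.inv_rpow hu.le, Real.rpow_neg hu.le,
          Real.rpow_neg (by positivity)]
        field_simp
    _ ≤ (1 + r⁻¹) ^ s * (1 + u) ^ (-s) := by gcongr

lemma measurable_norm_sub_rpow_mul {E : Type*} [NormedAddCommGroup E] [MeasurableSpace E]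
    [BorelSpace E] (p q : ℝ) (a b : E) :
    Measurable fun x : E => ‖x - a‖ ^ p * ‖x - b‖ ^ q :=
  ((continuous_id.sub continuous_const).norm.measurable.pow_const _).mul
    ((continuous_id.sub continuous_const).norm.measurable.pow_const _)

lemma rpow_abs_le_mul_norm_rpow_of_abs_le {E : Type*} [NormedAddCommGroup E] {C α z : ℝ} {y : E}
    (hz : |z| ≤ C * Real.sqrt (1 + ‖y‖ ^ 2) ^ (-2 : ℤ)) (hα : 0 ≤ α) (hy : y ≠ 0) :
    |z| ^ α ≤ C ^ α * ‖y‖ ^ (-(2 * α)) := by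
  have hy0 : 0 < ‖y‖ := norm_pos_iff.2 hy
  have hbracket : Real.sqrt (1 + ‖y‖ ^ 2) ^ (-2 : ℤ) ≤ (‖y‖ ^ 2)⁻¹ := by
    rw [zpow_neg, zpow_ofNat, Real.sq_sqrt (by positivity)]
    gcongr
    linarith
  have hC : 0 ≤ C := nonneg_of_mul_nonneg_left ((abs_nonneg z).trans hz) (by positivity)
  calc |z| ^ α ≤ (C * (‖y‖ ^ 2)⁻¹) ^ α :=
        Real.rpow_le_rpow (abs_nonneg z) (hz.trans (mul_le_mul_of_nonneg_left hbracket hC)) hα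
    _ = C ^ α * ‖y‖ ^ (-(2 * α)) := by
        rw [Real.mul_rpow hC (by positivity), Real.inv_rpow (by positivity),
          ← Real.rpow_natCast, ← Real.rpow_mul hy0.le, Real.rpow_neg hy0.le]
        norm_num

lemma ae_rpow_abs_mul_rpow_abs_le {E : Type*} [NormedAddCommGroup E] [MeasurableSpace E]
    (μ : Measure E) [NullSingletonClass μ] {f g : E → ℝ} {C α β : ℝ}
    (hf : ∀ y, |f y| ≤ C * Real.sqrt (1 + ‖y‖ ^ 2) ^ (-2 : ℤ))
    (hg : ∀ y, |g y| ≤ C * Real.sqrt (1 + ‖y‖ ^ 2) ^ (-2 : ℤ))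
    (hα : 0 ≤ α) (hβ : 0 ≤ β) (a b : E) :
    ∀ᵐ x ∂μ, |f (x - a)| ^ α * |g (x - b)| ^ β
      ≤ C ^ α * C ^ β * (‖x - a‖ ^ (-(2 * α)) * ‖x - b‖ ^ (-(2 * β))) := by
  filter_upwards [μ.ae_ne a, μ.ae_ne b] with x hxa hxb
  have hC : 0 ≤ C := nonneg_of_mul_nonneg_left ((abs_nonneg _).trans (hf 0)) (by positivity)
  calc |f (x - a)| ^ α * |g (x - b)| ^ β
      ≤ (C ^ α * ‖x - a‖ ^ (-(2 * α))) * (C ^ β * ‖x - b‖ ^ (-(2 * β))) :=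
        mul_le_mul (rpow_abs_le_mul_norm_rpow_of_abs_le (hf _) hα (sub_ne_zero.2 hxa))
          (rpow_abs_le_mul_norm_rpow_of_abs_le (hg _) hβ (sub_ne_zero.2 hxb))
          (by positivity) (by positivity)
    _ = C ^ α * C ^ β * (‖x - a‖ ^ (-(2 * α)) * ‖x - b‖ ^ (-(2 * β))) := by ring

section HaarMeasure

variable {E : Type*} [NormedAddCommGroup E] [NormedSpace ℝ E] [FiniteDimensional ℝ E]
  [MeasurableSpace E] [BorelSpace E] (μ : Measure E) [μ.IsAddHaarMeasure]

lemma integrableOn_ball_norm_sub_rpow_neg {p : ℝ} (hd : 1 ≤ finrank ℝ E)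
    (hp : p < finrank ℝ E) (c : E) (r : ℝ) :
    IntegrableOn (fun x : E => ‖x - c‖ ^ (-p)) (ball c r) μ := by
  have h0 : IntegrableOn (fun x : E => ‖x‖ ^ (-p)) (ball 0 r) μ :=
    integrableOn_ball_of_norm_le_rpow (C := 1) hd hp
      (.of_forall fun x => by simp [abs_of_nonneg (Real.rpow_nonneg (norm_nonneg x) _)])
      (measurable_norm.pow_const _).aestronglyMeasurable
  have hpre : (· - c) ⁻¹' ball (0 : E) r = ball c r := by
    ext x; simp [dist_eq_norm]
  rwa [← (measurePreserving_sub_right μ c).integrableOn_comp_preimage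
    (measurableEmbedding_subRight c), hpre] at h0

lemma integrableOn_compl_ball_norm_sub_rpow_neg {s : ℝ} (hs : finrank ℝ E < s) (c : E)
    {r : ℝ} (hr : 0 < r) :
    IntegrableOn (fun x : E => ‖x - c‖ ^ (-s)) (ball c r)ᶜ μ := by
  have hs0 : 0 ≤ s := (Nat.cast_nonneg _).trans hs.le
  have hdom : Integrable (fun x : E => (1 + r⁻¹) ^ s * (1 + ‖x - c‖) ^ (-s)) μ :=
    ((integrable_one_add_norm hs).comp_sub_right c).const_mul _
  refine hdom.integrableOn.mono'
    ((measurable_id.sub_const c).norm.pow_const _).aestronglyMeasurable.restrict <|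
    ae_restrict_of_forall_mem measurableSet_ball.compl fun x hx => ?_
  have hrx : r ≤ ‖x - c‖ := by simpa [dist_eq_norm] using hx
  rw [Real.norm_of_nonneg (by positivity)]
  exact rpow_neg_le_one_add_inv_rpow_mul hr hrx hs0

lemma integrableOn_ball_norm_sub_rpow_neg_mul {p q : ℝ} (hd : 1 ≤ finrank ℝ E)
    (hp : p < finrank ℝ E) (hq : 0 ≤ q) {a b : E} {r : ℝ} (hr : 0 < r) (hab : 2 * r ≤ ‖a - b‖) :
    IntegrableOn (fun x : E => ‖x - a‖ ^ (-p) * ‖x - b‖ ^ (-q)) (ball a r) μ := by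
  refine ((integrableOn_ball_norm_sub_rpow_neg μ hd hp a r).mul_const (r ^ (-q))).mono'
    (measurable_norm_sub_rpow_mul _ _ a b).aestronglyMeasurable
    (ae_restrict_of_forall_mem measurableSet_ball fun x hx => ?_)
  have hxa : ‖x - a‖ < r := mem_ball_iff_norm.1 hx
  have hxb : r ≤ ‖x - b‖ := by
    have := norm_sub_le_norm_sub_add_norm_sub a x b
    rw [norm_sub_rev a x] at this
    linarith
  rw [Real.norm_of_nonneg (by positivity)]
  exact mul_le_mul_of_nonneg_left (Real.rpow_le_rpow_of_nonpos hr hxb (neg_nonpos.2 hq))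
    (by positivity)

lemma integrableOn_compl_ball_inter_norm_sub_rpow_neg_mul {p q : ℝ}
    (hpq : finrank ℝ E < p + q) (hq : 0 ≤ q) {a b : E} {r : ℝ} (hr : 0 < r)
    (hab : ‖a - b‖ ≤ 2 * r) :
    IntegrableOn (fun x : E => ‖x - a‖ ^ (-p) * ‖x - b‖ ^ (-q)) ((ball a r)ᶜ ∩ (ball b r)ᶜ) μ := by
  refine (IntegrableOn.mono_set ((integrableOn_compl_ball_norm_sub_rpow_neg μ hpq a hr).const_mul
    (3 ^ q)) Set.inter_subset_left).mono'
    (measurable_norm_sub_rpow_mul _ _ a b).aestronglyMeasurable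
    (ae_restrict_of_forall_mem (measurableSet_ball.compl.inter measurableSet_ball.compl)
      fun x hx => ?_)
  have hxa : r ≤ ‖x - a‖ := by simpa [dist_eq_norm] using hx.1
  have hxb : r ≤ ‖x - b‖ := by simpa [dist_eq_norm] using hx.2
  have hcomp : ‖x - a‖ / 3 ≤ ‖x - b‖ := by
    have := norm_sub_le_norm_sub_add_norm_sub x b a
    rw [norm_sub_rev b a] at this
    linarith
  have hxa0 : 0 < ‖x - a‖ := hr.trans_le hxa
  rw [Real.norm_of_nonneg (by positivity)]
  calc ‖x - a‖ ^ (-p) * ‖x - b‖ ^ (-q) ≤ ‖x - a‖ ^ (-p) * (‖x - a‖ / 3) ^ (-q) :=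
        mul_le_mul_of_nonneg_left
          (Real.rpow_le_rpow_of_nonpos (by positivity) hcomp (neg_nonpos.2 hq)) (by positivity)
    _ = 3 ^ q * ‖x - a‖ ^ (-(p + q)) := by
        rw [Real.div_rpow hxa0.le (by norm_num), neg_add, Real.rpow_add hxa0,
          Real.rpow_neg (by norm_num : (0 : ℝ) ≤ 3)]
        field_simp

lemma integrable_norm_sub_rpow_neg_mul {p q : ℝ} (hp : p < finrank ℝ E) (hq : q < finrank ℝ E)
    (hpq : finrank ℝ E < p + q) {a b : E} (hab : a ≠ b) :
    Integrable (fun x : E => ‖x - a‖ ^ (-p) * ‖x - b‖ ^ (-q)) μ := by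
  have : Nontrivial E := nontrivial_of_ne a b hab
  have hd : 1 ≤ finrank ℝ E := finrank_pos
  have hr : 0 < ‖a - b‖ / 2 := by simpa [sub_eq_zero] using hab
  have hab' : ‖a - b‖ = 2 * (‖a - b‖ / 2) := by ring
  have near_a :=
    integrableOn_ball_norm_sub_rpow_neg_mul μ hd hp (q := q) (by linarith) hr hab'.ge
  have near_b : IntegrableOn (fun x : E => ‖x - a‖ ^ (-p) * ‖x - b‖ ^ (-q)) (ball b _) μ :=
    (integrableOn_ball_norm_sub_rpow_neg_mul μ hd hq (by linarith) hr
      ((norm_sub_rev a b).symm.trans hab').ge).congr_fun (fun x _ => mul_comm _ _)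
      measurableSet_ball
  have far :=
    integrableOn_compl_ball_inter_norm_sub_rpow_neg_mul μ hpq (q := q) (by linarith) hr hab'.le
  rw [← integrableOn_univ]
  refine (near_a.union (near_b.union far)).mono_set fun x _ => ?_
  simp only [Set.mem_union, Set.mem_inter_iff, Set.mem_compl_iff]
  tauto

lemma integral_norm_sub_smul_rpow_neg_mul (p q : ℝ) (a b : E) {t : ℝ} (ht : 0 < t) :
    ∫ x, ‖x - t • a‖ ^ (-p) * ‖x - t • b‖ ^ (-q) ∂μ
      = t ^ ((finrank ℝ E : ℝ) - (p + q)) * ∫ x, ‖x - a‖ ^ (-p) * ‖x - b‖ ^ (-q) ∂μ := by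
  have hscale : ∀ x : E, ‖t • x - t • a‖ ^ (-p) * ‖t • x - t • b‖ ^ (-q)
      = t ^ (-(p + q)) * (‖x - a‖ ^ (-p) * ‖x - b‖ ^ (-q)) := fun x => by
    rw [← smul_sub, ← smul_sub, norm_smul, norm_smul, Real.norm_of_nonneg ht.le,
      Real.mul_rpow ht.le (norm_nonneg _), Real.mul_rpow ht.le (norm_nonneg _), neg_add,
      Real.rpow_add ht]
    ring
  have h := μ.integral_comp_smul (fun x => ‖x - t • a‖ ^ (-p) * ‖x - t • b‖ ^ (-q)) t
  simp only [hscale, integral_const_mul] at h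
  rw [abs_of_pos (by positivity), smul_eq_mul] at h
  rw [sub_eq_add_neg, Real.rpow_add ht, Real.rpow_natCast, mul_assoc, h]
  field_simp

end HaarMeasure

theorem interaction_estimate_case_two_general (f1 f2 : E4 → ℝ) (C : ℝ)
    (hC : ∀ x : E4, |f1 x| ≤ C * Real.sqrt (1 + ‖x‖ ^ 2) ^ (-2 : ℤ)
      ∧ |f2 x| ≤ C * Real.sqrt (1 + ‖x‖ ^ 2) ^ (-2 : ℤ))
    (v1 v2 : E4) (hv : v1 ≠ v2)
    (α1 α2 : ℝ) (hα12 : α1 ≤ α2) (hα2 : α2 < 2) (hsum : 2 < α1 + α2) :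
    ∃ T0 > 0, ∃ C' > 0, ∀ t ≥ T0,
      (∫ x : E4, |f1 (x - t • v1)| ^ α1 * |f2 (x - t • v2)| ^ α2)
        ≤ C' * t ^ (4 - 2 * (α1 + α2)) := by
  have hdim : (finrank ℝ E4 : ℝ) = 4 := by simp
  have hC0 : 0 ≤ C := by simpa using (abs_nonneg _).trans (hC 0).1
  set J := ∫ x : E4, ‖x - v1‖ ^ (-(2 * α1)) * ‖x - v2‖ ^ (-(2 * α2))
  have hJ : 0 ≤ J := integral_nonneg fun x => by positivity
  refine ⟨1, one_pos, C ^ α1 * C ^ α2 * J + 1, by positivity, fun t ht => ?_⟩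
  have ht0 : 0 < t := one_pos.trans_le ht
  have hint := integrable_norm_sub_rpow_neg_mul volume (p := 2 * α1) (q := 2 * α2)
    (by linarith) (by linarith) (by linarith) (smul_right_injective E4 ht0.ne' |>.ne hv)
  calc (∫ x : E4, |f1 (x - t • v1)| ^ α1 * |f2 (x - t • v2)| ^ α2)
      ≤ ∫ x : E4, C ^ α1 * C ^ α2 * (‖x - t • v1‖ ^ (-(2 * α1)) * ‖x - t • v2‖ ^ (-(2 * α2))) :=
        integral_mono_of_nonneg (.of_forall fun x => by positivity) (hint.const_mul _)
          (ae_rpow_abs_mul_rpow_abs_le volume (fun y => (hC y).1) (fun y => (hC y).2)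
            (by linarith) (by linarith) _ _)
    _ = C ^ α1 * C ^ α2 * J * t ^ (4 - 2 * (α1 + α2)) := by
        rw [integral_const_mul, integral_norm_sub_smul_rpow_neg_mul volume _ _ v1 v2 ht0, hdim,
          show (4 : ℝ) - (2 * α1 + 2 * α2) = 4 - 2 * (α1 + α2) by ring]
        ring
    _ ≤ (C ^ α1 * C ^ α2 * J + 1) * t ^ (4 - 2 * (α1 + α2)) := by
        gcongr
        linarith

/-- Interaction estimate between two translated algebraically decaying profiles,
case `α₂ < 2`: the integral is `O(t^{4-2(α₁+α₂)})`. -/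
theorem interaction_estimate_case_two (f1 f2 : E4 → ℝ)
    (hf1 : Continuous f1) (hf2 : Continuous f2) (C : ℝ)
    (hC : ∀ x : E4, |f1 x| ≤ C * Real.sqrt (1 + ‖x‖ ^ 2) ^ (-2 : ℤ)
      ∧ |f2 x| ≤ C * Real.sqrt (1 + ‖x‖ ^ 2) ^ (-2 : ℤ))
    (v1 v2 : E4) (hv : v1 ≠ v2)
    (α1 α2 : ℝ) (hα1 : 0 < α1) (hα12 : α1 ≤ α2) (hα2 : α2 < 2) (hsum : 2 < α1 + α2) :
    ∃ T0 > 0, ∃ C' > 0, ∀ t ≥ T0,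
      (∫ x : E4, |f1 (x - t • v1)| ^ α1 * |f2 (x - t • v2)| ^ α2)
        ≤ C' * t ^ (4 - 2 * (α1 + α2)) :=
  interaction_estimate_case_two_general f1 f2 C hC v1 v2 hv α1 α2 hα12 hα2 hsum
end
end

section
/- Let $f_1, f_2 : \mathbb{R}^4 \to \mathbb{R}$ be continuous with $|f_i(x)| \le C\langle x\rangle^{-2}$, let $v_1 \ne v_2 \in \mathbb{R}^4$, and let $\alpha_1 \in (0, 2]$. Then there exist $T_0, C' > 0$ such that for all $t \ge T_0$, $\int_{\mathbb{R}^4} |f_1(x - v_1 t)|^{\alpha_1} |f_2(x - v_2 t)|^{2} \, dx \le C' t^{-2\alpha_1} \log t$. -/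
/-!
Write `⟨y⟩² = 1 + ‖y‖²`, `y₁ = x - t v₁`, `y₂ = x - t v₂`. The integrand is at most a constant
times `⟨y₁⟩^{-2α₁} ⟨y₂⟩^{-4}`, and since `‖y₁ - y₂‖ = 2R` with `R ≍ t`, one of `‖y₁‖, ‖y₂‖` is
at least `R`. Whichever bracket is larger absorbs a factor `R^{-2α₁}` (for `⟨y₂⟩` this uses
`α₁ ≤ 2`), so the product is at most `w(y₁) + w(y₂)` with `w(y) = max(R, ⟨y⟩)^{-2α₁} ⟨y⟩^{-4}`.
In dimension 4, `∫ w` splits into `R^{-2α₁} ∫_{‖y‖ < R} ⟨y⟩^{-4} ≍ R^{-2α₁} log R` and the tail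
`∫_{‖y‖ ≥ R} ⟨y⟩^{-2α₁-4} ≍ R^{-2α₁} / α₁`; the logarithm is the borderline loss.
-/

noncomputable section

open MeasureTheory

open Set Real Metric Module

def interactionProfile (α β R r : ℝ) : ℝ :=
  max (R ^ 2) (1 + r ^ 2) ^ (-α) * (1 + r ^ 2) ^ (-β)

section Profile

variable {α β R : ℝ}

lemma continuous_interactionProfile : Continuous (interactionProfile α β R) := by
  have hq : Continuous fun r : ℝ => 1 + r ^ 2 := by fun_prop
  exact ((continuous_const.max hq).rpow_const fun _ => Or.inl (by positivity)).mul
    (hq.rpow_const fun _ => Or.inl (by positivity))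

lemma interactionProfile_nonneg (r : ℝ) : 0 ≤ interactionProfile α β R r := by
  unfold interactionProfile
  positivity

lemma interactionProfile_le_rpow_mul (hα : 0 ≤ α) (hR : 0 < R) (r : ℝ) :
    interactionProfile α β R r ≤ R ^ (-(2 * α)) * (1 + r ^ 2) ^ (-β) := by
  have hRα : R ^ (-(2 * α)) = (R ^ 2) ^ (-α) := by
    rw [← rpow_natCast, ← rpow_mul hR.le]
    norm_num
  rw [hRα]
  exact mul_le_mul_of_nonneg_right
    (rpow_le_rpow_of_nonpos (by positivity) (le_max_left _ _) (by linarith)) (by positivity)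

lemma interactionProfile_le_rpow (hα : 0 ≤ α) (r : ℝ) :
    interactionProfile α β R r ≤ (1 + r ^ 2) ^ (-(α + β)) := by
  rw [neg_add, rpow_add (by positivity)]
  exact mul_le_mul_of_nonneg_right
    (rpow_le_rpow_of_nonpos (by positivity) (le_max_right _ _) (by linarith)) (by positivity)

lemma rpow_neg_mul_rpow_neg_le_add {ρ q₁ q₂ : ℝ} (hα : 0 ≤ α) (hαβ : α ≤ β)
    (hq₁ : 0 < q₁) (hq₂ : 0 < q₂) (hρ : ρ ≤ max q₁ q₂) :
    q₁ ^ (-α) * q₂ ^ (-β) ≤ max ρ q₁ ^ (-α) * q₁ ^ (-β) + max ρ q₂ ^ (-α) * q₂ ^ (-β) := by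
  rcases le_total q₂ q₁ with h | h
  · have hmax : max ρ q₂ ≤ q₁ := max_le (hρ.trans (max_eq_left h).le) h
    have : q₁ ^ (-α) ≤ max ρ q₂ ^ (-α) :=
      rpow_le_rpow_of_nonpos (by positivity) hmax (by linarith)
    exact le_add_of_nonneg_of_le (by positivity) (mul_le_mul_of_nonneg_right this (by positivity))
  · have hmax : max ρ q₁ ≤ q₂ := max_le (hρ.trans (max_eq_right h).le) h
    calc q₁ ^ (-α) * q₂ ^ (-β) = q₁ ^ (-α) * (q₂ ^ (-α) * q₂ ^ (-(β - α))) := by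
          rw [← rpow_add hq₂]; ring_nf
      _ ≤ q₁ ^ (-α) * (max ρ q₁ ^ (-α) * q₁ ^ (-(β - α))) := by
          refine mul_le_mul_of_nonneg_left (mul_le_mul ?_ ?_ (by positivity) (by positivity))
            (by positivity)
          · exact rpow_le_rpow_of_nonpos (by positivity) hmax (by linarith)
          · exact rpow_le_rpow_of_nonpos hq₁ h (by linarith)
      _ = max ρ q₁ ^ (-α) * q₁ ^ (-β) := by
          rw [mul_left_comm, ← rpow_add hq₁]; ring_nf
      _ ≤ _ := le_add_of_nonneg_right (by positivity)

lemma mul_rpow_neg_le_interactionProfile_add {E : Type*} [SeminormedAddCommGroup E]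
    (hα : 0 ≤ α) (hαβ : α ≤ β) (hR : 0 ≤ R) {y₁ y₂ : E} (hy : 2 * R ≤ ‖y₁ - y₂‖) :
    (1 + ‖y₁‖ ^ 2) ^ (-α) * (1 + ‖y₂‖ ^ 2) ^ (-β) ≤
      interactionProfile α β R ‖y₁‖ + interactionProfile α β R ‖y₂‖ := by
  have hR_le : R ≤ max ‖y₁‖ ‖y₂‖ := by
    linarith [norm_sub_le y₁ y₂, le_max_left ‖y₁‖ ‖y₂‖, le_max_right ‖y₁‖ ‖y₂‖]
  refine rpow_neg_mul_rpow_neg_le_add hα hαβ (by positivity) (by positivity) ?_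
  rcases le_max_iff.1 hR_le with h | h
  · exact le_max_of_le_left (by nlinarith)
  · exact le_max_of_le_right (by nlinarith)

end Profile

section Radial

variable {α R : ℝ}

lemma integral_div_one_add_sq (a b : ℝ) :
    ∫ r in a..b, r / (1 + r ^ 2) = (log (1 + b ^ 2) - log (1 + a ^ 2)) / 2 := by
  have hderiv (r : ℝ) : HasDerivAt (fun r => log (1 + r ^ 2) / 2) (r / (1 + r ^ 2)) r := by
    refine ((((hasDerivAt_pow 2 r).const_add 1).log (by positivity)).div_const 2).congr_deriv ?_
    push_cast
    ring
  have hcont : Continuous fun r : ℝ => r / (1 + r ^ 2) :=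
    continuous_id.div (by fun_prop) fun r => by positivity
  rw [intervalIntegral.integral_eq_sub_of_hasDerivAt (fun r _ => hderiv r)
    (hcont.intervalIntegrable a b)]
  ring

lemma pow_three_mul_interactionProfile_le_div (hα : 0 ≤ α) (hR : 0 < R) {r : ℝ} (hr : 0 ≤ r) :
    r ^ 3 * interactionProfile α 2 R r ≤ R ^ (-(2 * α)) * (r / (1 + r ^ 2)) := by
  have hq : 0 < 1 + r ^ 2 := by positivity
  have hcube : r ^ 3 / (1 + r ^ 2) ^ 2 ≤ r / (1 + r ^ 2) := by
    rw [div_le_div_iff₀ (by positivity) hq]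
    nlinarith [pow_nonneg hr 3, pow_nonneg hr 5]
  calc r ^ 3 * interactionProfile α 2 R r
      ≤ r ^ 3 * (R ^ (-(2 * α)) * (1 + r ^ 2) ^ (-(2 : ℝ))) :=
        mul_le_mul_of_nonneg_left (interactionProfile_le_rpow_mul hα hR r) (by positivity)
    _ = R ^ (-(2 * α)) * (r ^ 3 / (1 + r ^ 2) ^ 2) := by
        rw [rpow_neg hq.le]
        norm_cast
        ring
    _ ≤ R ^ (-(2 * α)) * (r / (1 + r ^ 2)) := by gcongr

lemma pow_three_mul_interactionProfile_le_rpow (hα : 0 ≤ α) {r : ℝ} (hr : 0 < r) :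
    r ^ 3 * interactionProfile α 2 R r ≤ r ^ (-(2 * α + 1)) := by
  calc r ^ 3 * interactionProfile α 2 R r ≤ r ^ 3 * (1 + r ^ 2) ^ (-(α + 2)) :=
        mul_le_mul_of_nonneg_left (interactionProfile_le_rpow hα r) (by positivity)
    _ ≤ r ^ 3 * (r ^ 2) ^ (-(α + 2)) := by
        refine mul_le_mul_of_nonneg_left ?_ (by positivity)
        exact rpow_le_rpow_of_nonpos (by positivity) (by linarith) (by linarith)
    _ = r ^ (-(2 * α + 1)) := by
        rw [← rpow_natCast r 3, ← rpow_natCast r 2, ← rpow_mul hr.le, ← rpow_add hr]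
        ring_nf

lemma integral_Ioi_pow_three_mul_interactionProfile_le (hα : 0 < α) (hR : 0 < R) :
    ∫ r in Ioi 0, r ^ 3 * interactionProfile α 2 R r ≤
      R ^ (-(2 * α)) * (log (1 + R ^ 2) / 2 + 1 / (2 * α)) := by
  have hcont : Continuous fun r => r ^ 3 * interactionProfile α 2 R r :=
    (continuous_pow 3).mul continuous_interactionProfile
  have hexp : -(2 * α + 1) < -1 := by linarith
  have hfar : IntegrableOn (fun r => r ^ 3 * interactionProfile α 2 R r) (Ioi R) := by
    refine (integrableOn_Ioi_rpow_of_lt hexp hR).mono' hcont.aestronglyMeasurable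
      (ae_restrict_of_forall_mem measurableSet_Ioi fun r hr => ?_)
    have hr : 0 < r := hR.trans hr
    rw [norm_of_nonneg (mul_nonneg (by positivity) (interactionProfile_nonneg r))]
    exact pow_three_mul_interactionProfile_le_rpow hα.le hr
  rw [← intervalIntegral.integral_interval_add_Ioi' (hcont.intervalIntegrable 0 R) hfar, mul_add]
  gcongr ?_ + ?_
  · have hcont' : Continuous fun r : ℝ => R ^ (-(2 * α)) * (r / (1 + r ^ 2)) :=
      continuous_const.mul (continuous_id.div (by fun_prop) fun r => by positivity)
    calc ∫ r in (0)..R, r ^ 3 * interactionProfile α 2 R r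
        ≤ ∫ r in (0)..R, R ^ (-(2 * α)) * (r / (1 + r ^ 2)) :=
          intervalIntegral.integral_mono_on hR.le (hcont.intervalIntegrable 0 R)
            (hcont'.intervalIntegrable 0 R)
            fun r hr => pow_three_mul_interactionProfile_le_div hα.le hR hr.1
      _ = R ^ (-(2 * α)) * (log (1 + R ^ 2) / 2) := by
          rw [intervalIntegral.integral_const_mul, integral_div_one_add_sq]
          simp
  · calc ∫ r in Ioi R, r ^ 3 * interactionProfile α 2 R r ≤ ∫ r in Ioi R, r ^ (-(2 * α + 1)) :=
          setIntegral_mono_on hfar (integrableOn_Ioi_rpow_of_lt hexp hR) measurableSet_Ioi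
            fun r hr => pow_three_mul_interactionProfile_le_rpow hα.le (hR.trans hr)
      _ = R ^ (-(2 * α)) * (1 / (2 * α)) := by
          rw [integral_Ioi_rpow_of_lt hexp hR]
          field_simp
          ring_nf

end Radial

section HaarMeasure

variable {E : Type*} [NormedAddCommGroup E] [NormedSpace ℝ E] [FiniteDimensional ℝ E]
  [MeasurableSpace E] [BorelSpace E] (μ : Measure E) [μ.IsAddHaarMeasure] {α β R : ℝ}

lemma integrable_interactionProfile_norm (hα : 0 ≤ α) (hd : (finrank ℝ E : ℝ) < 2 * (α + β)) :
    Integrable (fun y : E => interactionProfile α β R ‖y‖) μ := by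
  refine (integrable_rpow_neg_one_add_norm_sq (μ := μ) hd).mono'
    (continuous_interactionProfile.comp continuous_norm).aestronglyMeasurable
    (Filter.Eventually.of_forall fun y => ?_)
  rw [norm_of_nonneg (interactionProfile_nonneg _), neg_div, mul_div_cancel_left₀ _ two_ne_zero]
  exact interactionProfile_le_rpow hα _

lemma integral_interactionProfile_norm_le (hE : finrank ℝ E = 4) (hα : 0 < α) (hR : 0 < R) :
    ∫ y, interactionProfile α 2 R ‖y‖ ∂μ ≤
      4 * μ.real (ball 0 1) * (R ^ (-(2 * α)) * (log (1 + R ^ 2) / 2 + 1 / (2 * α))) := by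
  have : Nontrivial E := Module.nontrivial_of_finrank_eq_succ hE
  rw [integral_fun_norm_addHaar μ (interactionProfile α 2 R), hE, nsmul_eq_mul, smul_eq_mul,
    ← mul_assoc]
  refine mul_le_mul_of_nonneg_left ?_ (by positivity)
  simpa using integral_Ioi_pow_three_mul_interactionProfile_le hα hR

lemma integral_abs_rpow_mul_abs_rpow_le {f₁ f₂ : E → ℝ} {C₁ C₂ : ℝ} (hα : 0 ≤ α) (hαβ : α ≤ β)
    (hR : 0 ≤ R) (hd : (finrank ℝ E : ℝ) < 2 * (α + β))
    (hf₁ : ∀ x, |f₁ x| ^ α ≤ C₁ * (1 + ‖x‖ ^ 2) ^ (-α))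
    (hf₂ : ∀ x, |f₂ x| ^ β ≤ C₂ * (1 + ‖x‖ ^ 2) ^ (-β)) {a b : E} (hab : 2 * R ≤ ‖a - b‖) :
    ∫ x, |f₁ (x - a)| ^ α * |f₂ (x - b)| ^ β ∂μ ≤
      C₁ * C₂ * (2 * ∫ y, interactionProfile α β R ‖y‖ ∂μ) := by
  have hC₁ : 0 ≤ C₁ :=
    nonneg_of_mul_nonneg_left ((by positivity : 0 ≤ |f₁ 0| ^ α).trans (hf₁ 0)) (by positivity)
  have hC₂ : 0 ≤ C₂ :=
    nonneg_of_mul_nonneg_left ((by positivity : 0 ≤ |f₂ 0| ^ β).trans (hf₂ 0)) (by positivity)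
  have hw := integrable_interactionProfile_norm μ (R := R) hα hd
  have hpt (x : E) : |f₁ (x - a)| ^ α * |f₂ (x - b)| ^ β ≤
      C₁ * C₂ * (interactionProfile α β R ‖x - a‖ + interactionProfile α β R ‖x - b‖) := by
    have hsep : 2 * R ≤ ‖(x - a) - (x - b)‖ := by rwa [sub_sub_sub_cancel_left, norm_sub_rev]
    calc |f₁ (x - a)| ^ α * |f₂ (x - b)| ^ β
        ≤ (C₁ * (1 + ‖x - a‖ ^ 2) ^ (-α)) * (C₂ * (1 + ‖x - b‖ ^ 2) ^ (-β)) :=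
          mul_le_mul (hf₁ _) (hf₂ _) (by positivity) (by positivity)
      _ = C₁ * C₂ * ((1 + ‖x - a‖ ^ 2) ^ (-α) * (1 + ‖x - b‖ ^ 2) ^ (-β)) := by ring
      _ ≤ _ := by
          gcongr
          exact mul_rpow_neg_le_interactionProfile_add hα hαβ hR hsep
  calc ∫ x, |f₁ (x - a)| ^ α * |f₂ (x - b)| ^ β ∂μ
      ≤ ∫ x, C₁ * C₂ * (interactionProfile α β R ‖x - a‖ + interactionProfile α β R ‖x - b‖) ∂μ :=
        integral_mono_of_nonneg (Filter.Eventually.of_forall fun x => by positivity)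
          (((hw.comp_sub_right a).add (hw.comp_sub_right b)).const_mul _)
          (Filter.Eventually.of_forall hpt)
    _ = C₁ * C₂ * (2 * ∫ y, interactionProfile α β R ‖y‖ ∂μ) := by
        rw [integral_const_mul, integral_add (hw.comp_sub_right a) (hw.comp_sub_right b),
          integral_sub_right_eq_self (fun y => interactionProfile α β R ‖y‖),
          integral_sub_right_eq_self (fun y => interactionProfile α β R ‖y‖), two_mul]

lemma integral_abs_rpow_mul_abs_sq_le (hE : finrank ℝ E = 4) {f₁ f₂ : E → ℝ} {C₁ C₂ : ℝ}
    (hα : 0 < α) (hα₂ : α ≤ 2) (hR : 0 < R)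
    (hf₁ : ∀ x, |f₁ x| ^ α ≤ C₁ * (1 + ‖x‖ ^ 2) ^ (-α))
    (hf₂ : ∀ x, |f₂ x| ^ (2 : ℝ) ≤ C₂ * (1 + ‖x‖ ^ 2) ^ (-2 : ℝ)) {a b : E}
    (hab : 2 * R ≤ ‖a - b‖) :
    ∫ x, |f₁ (x - a)| ^ α * |f₂ (x - b)| ^ (2 : ℝ) ∂μ ≤
      C₁ * C₂ * (8 * μ.real (ball 0 1)) *
        (R ^ (-(2 * α)) * (log (1 + R ^ 2) / 2 + 1 / (2 * α))) := by
  have hC : 0 ≤ C₁ * C₂ := mul_nonneg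
    (nonneg_of_mul_nonneg_left ((by positivity : 0 ≤ |f₁ 0| ^ α).trans (hf₁ 0)) (by positivity))
    (nonneg_of_mul_nonneg_left ((by positivity : 0 ≤ |f₂ 0| ^ (2 : ℝ)).trans (hf₂ 0))
      (by positivity))
  calc ∫ x, |f₁ (x - a)| ^ α * |f₂ (x - b)| ^ (2 : ℝ) ∂μ
      ≤ C₁ * C₂ * (2 * ∫ y, interactionProfile α 2 R ‖y‖ ∂μ) :=
        integral_abs_rpow_mul_abs_rpow_le μ hα.le hα₂ hR.le (by rw [hE]; push_cast; linarith)
          hf₁ hf₂ hab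
    _ ≤ C₁ * C₂ * (2 * (4 * μ.real (ball 0 1) *
          (R ^ (-(2 * α)) * (log (1 + R ^ 2) / 2 + 1 / (2 * α))))) := by
        gcongr
        exact integral_interactionProfile_norm_le μ hE hα hR
    _ = _ := by ring

end HaarMeasure

lemma abs_rpow_le_of_abs_le_mul_sqrt_zpow {u C q p : ℝ} (hq : 0 < q) (hp : 0 ≤ p)
    (hu : |u| ≤ C * sqrt q ^ (-2 : ℤ)) : |u| ^ p ≤ C ^ p * q ^ (-p) := by
  rw [zpow_neg, zpow_two, mul_self_sqrt hq.le] at hu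
  have hC : 0 ≤ C := nonneg_of_mul_nonneg_left ((abs_nonneg u).trans hu) (by positivity)
  calc |u| ^ p ≤ (C * q⁻¹) ^ p := rpow_le_rpow (abs_nonneg u) hu hp
    _ = C ^ p * q ^ (-p) := by rw [mul_rpow hC (by positivity), inv_rpow hq.le, rpow_neg hq.le]

lemma log_one_add_mul_sq_le {κ t : ℝ} (ht : 1 + κ ^ 2 ≤ t) :
    log (1 + (κ * t) ^ 2) ≤ 4 * log t := by
  have ht2 : 1 + κ ^ 2 ≤ t ^ 2 := by nlinarith [sq_nonneg κ]
  have ht4 : 1 + (κ * t) ^ 2 ≤ t ^ 4 := by nlinarith [mul_le_mul_of_nonneg_left ht2 (sq_nonneg t)]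
  calc log (1 + (κ * t) ^ 2) ≤ log (t ^ 4) := log_le_log (by positivity) ht4
    _ = 4 * log t := by rw [log_pow]; norm_num

lemma rpow_neg_mul_log_one_add_sq_le {κ α t : ℝ} (hκ : 0 < κ) (hα : 0 < α)
    (ht : max 3 (1 + κ ^ 2) ≤ t) :
    (κ * t) ^ (-(2 * α)) * (log (1 + (κ * t) ^ 2) / 2 + 1 / (2 * α)) ≤
      κ ^ (-(2 * α)) * (2 + 1 / (2 * α)) * (t ^ (-(2 * α)) * log t) := by
  have ht0 : 0 < t := by linarith [le_of_max_le_left ht]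
  have hlog : 1 ≤ log t := by
    rw [le_log_iff_exp_le ht0]
    linarith [exp_one_lt_d9, le_of_max_le_left ht]
  have hbracket : log (1 + (κ * t) ^ 2) / 2 + 1 / (2 * α) ≤ (2 + 1 / (2 * α)) * log t := by
    have := mul_le_mul_of_nonneg_left hlog (by positivity : (0 : ℝ) ≤ 1 / (2 * α))
    linarith [log_one_add_mul_sq_le (le_of_max_le_right ht)]
  calc (κ * t) ^ (-(2 * α)) * (log (1 + (κ * t) ^ 2) / 2 + 1 / (2 * α))
      ≤ (κ * t) ^ (-(2 * α)) * ((2 + 1 / (2 * α)) * log t) := by gcongr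
    _ = κ ^ (-(2 * α)) * (2 + 1 / (2 * α)) * (t ^ (-(2 * α)) * log t) := by
        rw [mul_rpow hκ.le ht0.le]
        ring

theorem interaction_estimate_case_three_general (f1 f2 : E4 → ℝ) (C : ℝ)
    (hC : ∀ x : E4, |f1 x| ≤ C * Real.sqrt (1 + ‖x‖ ^ 2) ^ (-2 : ℤ)
      ∧ |f2 x| ≤ C * Real.sqrt (1 + ‖x‖ ^ 2) ^ (-2 : ℤ))
    (v1 v2 : E4) (hv : v1 ≠ v2)
    (α1 : ℝ) (hα1 : 0 < α1) (hα1' : α1 ≤ 2) :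
    ∃ T0 > 0, ∃ C' > 0, ∀ t ≥ T0,
      (∫ x : E4, |f1 (x - t • v1)| ^ α1 * |f2 (x - t • v2)| ^ (2 : ℝ))
        ≤ C' * t ^ (-(2 * α1)) * Real.log t := by
  have hC0 : 0 ≤ C := nonneg_of_mul_nonneg_left ((abs_nonneg _).trans (hC 0).1) (by positivity)
  set κ := ‖v1 - v2‖ / 2 with hκ_def
  have hκ : 0 < κ := half_pos (norm_pos_iff.2 (sub_ne_zero.2 hv))
  set M := C ^ α1 * C ^ (2 : ℝ) * (8 * volume.real (ball (0 : E4) 1))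
  have hM : 0 ≤ M := by positivity
  set K := κ ^ (-(2 * α1)) * (2 + 1 / (2 * α1))
  refine ⟨max 3 (1 + κ ^ 2), by positivity, (M + 1) * K, by positivity, fun t ht => ?_⟩
  have ht0 : 0 < t := by linarith [le_of_max_le_left ht]
  have hsep : 2 * (κ * t) ≤ ‖t • v1 - t • v2‖ := by
    rw [← smul_sub, norm_smul, norm_of_nonneg ht0.le, hκ_def]
    linarith
  have hlog : 0 ≤ log t := log_nonneg (by linarith [le_of_max_le_left ht])
  calc ∫ x : E4, |f1 (x - t • v1)| ^ α1 * |f2 (x - t • v2)| ^ (2 : ℝ)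
      ≤ M * ((κ * t) ^ (-(2 * α1)) * (log (1 + (κ * t) ^ 2) / 2 + 1 / (2 * α1))) :=
        integral_abs_rpow_mul_abs_sq_le volume finrank_euclideanSpace_fin hα1 hα1' (by positivity)
          (fun x => abs_rpow_le_of_abs_le_mul_sqrt_zpow (by positivity) hα1.le (hC x).1)
          (fun x => abs_rpow_le_of_abs_le_mul_sqrt_zpow (by positivity) zero_le_two (hC x).2) hsep
    _ ≤ M * (K * (t ^ (-(2 * α1)) * log t)) :=
        mul_le_mul_of_nonneg_left (rpow_neg_mul_log_one_add_sq_le hκ hα1 ht) hM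
    _ ≤ (M + 1) * K * t ^ (-(2 * α1)) * log t := by
        rw [← mul_assoc, ← mul_assoc]
        gcongr
        linarith

/-- Interaction estimate between two translated algebraically decaying profiles,
borderline case `α₂ = 2`: the integral is `O(t^{-2α₁} log t)`. -/
theorem interaction_estimate_case_three (f1 f2 : E4 → ℝ)
    (hf1 : Continuous f1) (hf2 : Continuous f2) (C : ℝ)
    (hC : ∀ x : E4, |f1 x| ≤ C * Real.sqrt (1 + ‖x‖ ^ 2) ^ (-2 : ℤ)
      ∧ |f2 x| ≤ C * Real.sqrt (1 + ‖x‖ ^ 2) ^ (-2 : ℤ))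
    (v1 v2 : E4) (hv : v1 ≠ v2)
    (α1 : ℝ) (hα1 : 0 < α1) (hα1' : α1 ≤ 2) :
    ∃ T0 > 0, ∃ C' > 0, ∀ t ≥ T0,
      (∫ x : E4, |f1 (x - t • v1)| ^ α1 * |f2 (x - t • v2)| ^ (2 : ℝ))
        ≤ C' * t ^ (-(2 * α1)) * Real.log t :=
  interaction_estimate_case_three_general f1 f2 C hC v1 v2 hv α1 hα1 hα1'
end
end

section
/- Let $\psi : \mathbb{R}^4 \to \mathbb{R}$ be continuous with $|\psi(x)| \le C\langle x\rangle^{-2}$, and let $\xi : [0,\infty)\to[0,1]$ be continuous with support in $[0,2]$. Let $\ell, \ell' \in (-1,1)$ with $\ell \ne \ell'$, let $e_1$ be the first standard basis vector, and let $0 < \sigma \le \frac{1}{10}|\ell - \ell'|$. Define $\Psi(t,x) = \psi\big(\frac{x_1 - \ell t}{\sqrt{1-\ell^2}}, \bar x\big)$, $\Psi'(t,x) = \psi\big(\frac{x_1 - \ell' t}{\sqrt{1-\ell'^2}}, \bar x\big)$, and $\xi_\ell(t,x) = \xi\big((\sigma t)^{-1}\big|\big(\frac{x_1-\ell t}{\sqrt{1-\ell^2}},\bar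 x\big)\big|\big)$. Then there exist $T_0, C' > 0$ such that for all $t \ge T_0$, $\left| \int_{\mathbb{R}^4} \Psi'(t,x)\,\Psi(t,x)\,\xi_\ell(t,x)\, dx \right| \le C'$. -/
noncomputable section

open MeasureTheory

/-- The Lorentz-boosted and translated coordinates:
`boost ℓ t x = ((x₁ - ℓt)/√(1-ℓ²), x̄)`. -/
def boost (ℓ t : ℝ) (x : E4) : E4 :=
  (WithLp.equiv 2 (Fin 4 → ℝ)).symm
    (fun i => if i = 0 then (x 0 - ℓ * t) / Real.sqrt (1 - ℓ ^ 2) else x i)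

/-! The cutoff restricts the integral to `‖boost ℓ t x‖ ≤ 2σt`. Each boost only stretches the first
coordinate around the centre `ℓt e₁`, so `‖x - ℓt e₁‖ ≤ ‖boost ℓ t x‖`, and the triangle inequality
between the two centres gives `‖boost ℓ' t x‖ ≥ (|ℓ - ℓ'| - 2σ) t ≥ (4/5) |ℓ - ℓ'| t`: there the
second profile is `O(t⁻²)`. The first profile is dominated by `⟨x - ℓt e₁⟩⁻²` on a ball of radius
`2σt`, whose integral in dimension four is `O(t²)` by polar coordinates. -/

open Metric Set Module

section PolarBound

variable {E : Type*} [NormedAddCommGroup E] [NormedSpace ℝ E] [MeasurableSpace E] [BorelSpace E]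
  [FiniteDimensional ℝ E] (μ : Measure E) [μ.IsAddHaarMeasure]

lemma setIntegral_closedBall_inv_one_add_sq_norm_le (hE : 3 ≤ finrank ℝ E) {R : ℝ} (hR : 0 ≤ R) :
    ∫ x in closedBall (0 : E) R, (1 + ‖x‖ ^ 2)⁻¹ ∂μ ≤
      finrank ℝ E * μ.real (ball 0 1) * R ^ (finrank ℝ E - 2) := by
  set n := finrank ℝ E
  have : Nontrivial E := nontrivial_of_finrank_pos (R := ℝ) (by omega)
  set g : ℝ → ℝ := (Iic R).indicator fun r => (1 + r ^ 2)⁻¹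
  have hradial : ∫ x in closedBall (0 : E) R, (1 + ‖x‖ ^ 2)⁻¹ ∂μ = ∫ x, g ‖x‖ ∂μ := by
    rw [← integral_indicator measurableSet_closedBall]
    congr 1 with x
    by_cases hx : ‖x‖ ≤ R <;> simp [g, hx]
  have hpointwise : ∀ y ∈ Ioc 0 R, y ^ (n - 1) * (1 + y ^ 2)⁻¹ ≤ R ^ (n - 3) := by
    rintro y ⟨hy0, hyR⟩
    have hsplit : y ^ (n - 1) = y ^ (n - 3) * y ^ 2 := by rw [← pow_add]; congr 1; omega
    rw [hsplit, mul_inv_le_iff₀ (by positivity)]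
    calc y ^ (n - 3) * y ^ 2 ≤ R ^ (n - 3) * y ^ 2 := by gcongr
      _ ≤ R ^ (n - 3) * (1 + y ^ 2) := by nlinarith [pow_nonneg hR (n - 3)]
  have hradial_le : ∫ y in Ioi (0 : ℝ), y ^ (n - 1) • g y ≤ R ^ (n - 2) := by
    have hcont : Continuous fun y : ℝ => y ^ (n - 1) * (1 + y ^ 2)⁻¹ := by
      fun_prop (disch := intro y; positivity)
    calc ∫ y in Ioi (0 : ℝ), y ^ (n - 1) • g y
        = ∫ y in Ioc 0 R, y ^ (n - 1) * (1 + y ^ 2)⁻¹ := by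
          rw [← Ioi_inter_Iic, ← setIntegral_indicator measurableSet_Iic]
          refine setIntegral_congr_fun measurableSet_Ioi fun y _ => ?_
          by_cases hy : y ≤ R <;> simp [g, hy]
      _ ≤ ∫ _ in Ioc 0 R, R ^ (n - 3) :=
          setIntegral_mono_on hcont.integrableOn_Ioc (integrableOn_const measure_Ioc_lt_top.ne)
            measurableSet_Ioc hpointwise
      _ = R ^ (n - 2) := by
          rw [setIntegral_const, Real.volume_real_Ioc_of_le hR, sub_zero, smul_eq_mul,
            ← pow_succ']
          congr 1; omega
  rw [hradial, integral_fun_norm_addHaar μ g, nsmul_eq_mul, smul_eq_mul, mul_assoc]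
  exact mul_le_mul_of_nonneg_left (mul_le_mul_of_nonneg_left hradial_le measureReal_nonneg)
    n.cast_nonneg

end PolarBound

lemma EuclideanSpace.norm_le_norm_of_forall_norm_le {𝕜 ι : Type*} [RCLike 𝕜] [Fintype ι]
    {x y : EuclideanSpace 𝕜 ι} (h : ∀ i, ‖x i‖ ≤ ‖y i‖) : ‖x‖ ≤ ‖y‖ := by
  rw [EuclideanSpace.norm_eq, EuclideanSpace.norm_eq]
  gcongr with i
  exact h i

def boostCenter (ℓ t : ℝ) : E4 := EuclideanSpace.single 0 (ℓ * t)

lemma norm_sub_boostCenter_le_norm_boost {ℓ : ℝ} (hℓ : ℓ ∈ Ioo (-1 : ℝ) 1) (t : ℝ) (x : E4) :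
    ‖x - boostCenter ℓ t‖ ≤ ‖boost ℓ t x‖ := by
  have hs0 : 0 < √(1 - ℓ ^ 2) := Real.sqrt_pos.mpr (by nlinarith [hℓ.1, hℓ.2])
  have hs1 : √(1 - ℓ ^ 2) ≤ 1 := Real.sqrt_le_one.mpr (by nlinarith)
  refine EuclideanSpace.norm_le_norm_of_forall_norm_le fun i => ?_
  by_cases hi : i = 0
  · subst hi
    simp [boost, boostCenter, abs_of_pos hs0]
    exact le_div_self (abs_nonneg _) hs0 hs1
  · simp [boost, boostCenter, hi]

lemma abs_sub_mul_abs_le_norm_boost_add {ℓ ℓ' : ℝ} (hℓ : ℓ ∈ Ioo (-1 : ℝ) 1)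
    (hℓ' : ℓ' ∈ Ioo (-1 : ℝ) 1) (t : ℝ) (x : E4) :
    |ℓ - ℓ'| * |t| ≤ ‖boost ℓ t x‖ + ‖boost ℓ' t x‖ := by
  calc |ℓ - ℓ'| * |t| = ‖boostCenter ℓ t - boostCenter ℓ' t‖ := by
        simp [boostCenter, ← PiLp.single_sub, ← sub_mul]
    _ ≤ ‖x - boostCenter ℓ t‖ + ‖x - boostCenter ℓ' t‖ := by
        simpa only [dist_eq_norm] using dist_triangle_left (boostCenter ℓ t) (boostCenter ℓ' t) x
    _ ≤ ‖boost ℓ t x‖ + ‖boost ℓ' t x‖ := by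
        gcongr <;> apply norm_sub_boostCenter_le_norm_boost <;> assumption

lemma sqrt_one_add_sq_zpow_neg_two (r : ℝ) : √(1 + r ^ 2) ^ (-2 : ℤ) = (1 + r ^ 2)⁻¹ := by
  rw [zpow_neg, zpow_two, Real.mul_self_sqrt (by positivity)]

lemma abs_cross_integrand_le {ψ : E4 → ℝ} {C : ℝ} (hψ : ∀ y, |ψ y| ≤ C * (1 + ‖y‖ ^ 2)⁻¹)
    {ξ : ℝ → ℝ} (hξ01 : ∀ r, ξ r ∈ Icc (0 : ℝ) 1) (hsupp : ∀ r, 2 < r → ξ r = 0)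
    {ℓ ℓ' σ t : ℝ} (hℓ : ℓ ∈ Ioo (-1 : ℝ) 1) (hℓ' : ℓ' ∈ Ioo (-1 : ℝ) 1) (hσ0 : 0 < σ)
    (hσ : σ ≤ |ℓ - ℓ'| / 10) (ht : 0 < t) (x : E4) :
    |ψ (boost ℓ' t x) * ψ (boost ℓ t x) * ξ (‖boost ℓ t x‖ / (σ * t))| ≤
      C * ((4 / 5 * |ℓ - ℓ'| * t) ^ 2)⁻¹ *
        (C * (closedBall 0 (2 * σ * t)).indicator (fun y => (1 + ‖y‖ ^ 2)⁻¹)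
          (x - boostCenter ℓ t)) := by
  have hC : 0 ≤ C := by simpa using (abs_nonneg _).trans (hψ 0)
  have hweight : 0 ≤ (closedBall 0 (2 * σ * t)).indicator (fun y : E4 => (1 + ‖y‖ ^ 2)⁻¹)
      (x - boostCenter ℓ t) := indicator_nonneg (fun y _ => by positivity) _
  by_cases hx : ‖boost ℓ t x‖ ≤ 2 * σ * t
  · have hnear := norm_sub_boostCenter_le_norm_boost hℓ t x
    have hfar : 4 / 5 * |ℓ - ℓ'| * t ≤ ‖boost ℓ' t x‖ := by
      have := abs_sub_mul_abs_le_norm_boost_add hℓ hℓ' t x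
      rw [abs_of_pos ht] at this
      nlinarith
    have hfar_decay : |ψ (boost ℓ' t x)| ≤ C * ((4 / 5 * |ℓ - ℓ'| * t) ^ 2)⁻¹ := by
      refine (hψ _).trans ?_
      have hρ : 0 < 4 / 5 * |ℓ - ℓ'| * t := by
        have : 0 < |ℓ - ℓ'| := by linarith
        positivity
      gcongr
      nlinarith [pow_le_pow_left₀ hρ.le hfar 2]
    have hnear_decay : |ψ (boost ℓ t x)| ≤ C * (closedBall 0 (2 * σ * t)).indicator
        (fun y => (1 + ‖y‖ ^ 2)⁻¹) (x - boostCenter ℓ t) := by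
      rw [indicator_of_mem (by simpa using hnear.trans hx)]
      exact (hψ _).trans (by gcongr)
    have hcut : |ξ (‖boost ℓ t x‖ / (σ * t))| ≤ 1 := by
      obtain ⟨h0, h1⟩ := hξ01 (‖boost ℓ t x‖ / (σ * t))
      exact abs_le.mpr ⟨by linarith, h1⟩
    calc _ = |ψ (boost ℓ' t x)| * |ψ (boost ℓ t x)| * |ξ (‖boost ℓ t x‖ / (σ * t))| := by
          rw [abs_mul, abs_mul]
      _ ≤ _ * _ * 1 := by gcongr
      _ = _ := mul_one _
  · rw [hsupp _ (by rw [lt_div_iff₀ (by positivity)]; linarith), mul_zero, abs_zero]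
    positivity

theorem boosted_cross_term_bounded_general (ψ : E4 → ℝ) (C : ℝ)
    (hψ : ∀ x : E4, |ψ x| ≤ C * Real.sqrt (1 + ‖x‖ ^ 2) ^ (-2 : ℤ))
    (ξ : ℝ → ℝ) (hξ01 : ∀ r : ℝ, ξ r ∈ Set.Icc (0 : ℝ) 1)
    (hsupp : ∀ r : ℝ, 2 < r → ξ r = 0)
    (ℓ ℓ' σ : ℝ) (hℓ : ℓ ∈ Set.Ioo (-1 : ℝ) 1) (hℓ' : ℓ' ∈ Set.Ioo (-1 : ℝ) 1)
    (hσ0 : 0 < σ) (hσ : σ ≤ |ℓ - ℓ'| / 10) :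
    ∃ T0 > 0, ∃ C' > 0, ∀ t ≥ T0,
      |∫ x : E4, ψ (boost ℓ' t x) * ψ (boost ℓ t x) * ξ (‖boost ℓ t x‖ / (σ * t))|
        ≤ C' := by
  simp only [sqrt_one_add_sq_zpow_neg_two] at hψ
  have hC : 0 ≤ C := by simpa using (abs_nonneg _).trans (hψ 0)
  have hd : 0 < |ℓ - ℓ'| := by linarith
  set v := volume.real (ball (0 : E4) 1)
  refine ⟨1, one_pos, C * ((4 / 5 * |ℓ - ℓ'|) ^ 2)⁻¹ * (C * (4 * v * (2 * σ) ^ 2)) + 1,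
    by positivity, fun t ht => ?_⟩
  have ht0 : 0 < t := one_pos.trans_le ht
  set g : E4 → ℝ := (closedBall 0 (2 * σ * t)).indicator fun y => (1 + ‖y‖ ^ 2)⁻¹
  have hg : Integrable g := by
    refine (integrable_indicator_iff measurableSet_closedBall).2 ?_
    have hcont : Continuous fun y : E4 => (1 + ‖y‖ ^ 2)⁻¹ := by
      fun_prop (disch := intro y; positivity)
    exact hcont.continuousOn.integrableOn_compact (isCompact_closedBall _ _)
  rw [← Real.norm_eq_abs]
  calc _ ≤ ∫ x, C * ((4 / 5 * |ℓ - ℓ'| * t) ^ 2)⁻¹ * (C * g (x - boostCenter ℓ t)) :=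
        norm_integral_le_of_norm_le (((hg.comp_sub_right _).const_mul _).const_mul _)
          (.of_forall (abs_cross_integrand_le hψ hξ01 hsupp hℓ hℓ' hσ0 hσ ht0))
    _ = C * ((4 / 5 * |ℓ - ℓ'| * t) ^ 2)⁻¹ *
          (C * ∫ y in closedBall (0 : E4) (2 * σ * t), (1 + ‖y‖ ^ 2)⁻¹) := by
        rw [integral_const_mul, integral_const_mul, integral_sub_right_eq_self,
          integral_indicator measurableSet_closedBall]
    _ ≤ C * ((4 / 5 * |ℓ - ℓ'| * t) ^ 2)⁻¹ * (C * (4 * v * (2 * σ * t) ^ 2)) := by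
        gcongr
        simpa using setIntegral_closedBall_inv_one_add_sq_norm_le (volume : Measure E4) (by simp)
          (by positivity : 0 ≤ 2 * σ * t)
    _ = C * ((4 / 5 * |ℓ - ℓ'|) ^ 2)⁻¹ * (C * (4 * v * (2 * σ) ^ 2)) := by
        field_simp
    _ ≤ _ := le_add_of_nonneg_right zero_le_one

/-- The cross term between two boosted copies of the slowly decaying kernel function,
cut off at scale `σt` around the first soliton center, is uniformly bounded in time. -/
theorem boosted_cross_term_bounded (ψ : E4 → ℝ) (hc : Continuous ψ) (C : ℝ)
    (hψ : ∀ x : E4, |ψ x| ≤ C * Real.sqrt (1 + ‖x‖ ^ 2) ^ (-2 : ℤ))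
    (ξ : ℝ → ℝ) (hξc : Continuous ξ) (hξ01 : ∀ r : ℝ, ξ r ∈ Set.Icc (0 : ℝ) 1)
    (hsupp : ∀ r : ℝ, 2 < r → ξ r = 0)
    (ℓ ℓ' σ : ℝ) (hℓ : ℓ ∈ Set.Ioo (-1 : ℝ) 1) (hℓ' : ℓ' ∈ Set.Ioo (-1 : ℝ) 1)
    (hne : ℓ ≠ ℓ') (hσ0 : 0 < σ) (hσ : σ ≤ |ℓ - ℓ'| / 10) :
    ∃ T0 > 0, ∃ C' > 0, ∀ t ≥ T0,
      |∫ x : E4, ψ (boost ℓ' t x) * ψ (boost ℓ t x) * ξ (‖boost ℓ t x‖ / (σ * t))|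
        ≤ C' :=
  boosted_cross_term_bounded_general ψ C hψ ξ hξ01 hsupp ℓ ℓ' σ hℓ hℓ' hσ0 hσ
end
end

section
/- Let $Q : \mathbb{R}^4 \to \mathbb{R}$ be continuous with $|Q(x)| \le C\langle x\rangle^{-3}$ and suppose $|Q(x) - x_4/|x|^4| \le C|x|^{-4}$ for $|x| > 1$. Let $\ell_1 \ne \ell_2 \in (-1,1)$ and define $Q_n(t,x) = Q\big(\frac{x_1 - \ell_n t}{\sqrt{1-\ell_n^2}}, \bar x\big)$ for $n = 1, 2$. Then there exist $T_0, C' > 0$ such that for all $t \ge T_0$, $\|Q_1(t,\cdot)^2 \, Q_2(t,\cdot)\|_{L^2(\mathbb{R}^4)} \le C' t^{-4}$. -/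
/-!
Write `yₙ = boost ℓₙ t x` and `vₙ = ℓₙ t e₁`. The boost only stretches the first coordinate, so
`‖x - vₙ‖ ≤ ‖yₙ‖` and `|x₄| ≤ ‖y₁‖`; since the centres are `|ℓ₁ - ℓ₂| t = 2τ` apart, one of
`‖y₁‖`, `‖y₂‖` is at least `τ`. Where `‖y₂‖ ≥ τ`, the asymptotics give
`|Q y₂| ≤ (|x₄| + C) / τ⁴ ≲ ⟨y₁⟩ τ⁻⁴`, and the extra `⟨y₁⟩` is absorbed by `Q(y₁)⁴ ≲ ⟨y₁⟩⁻¹²`;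
where `‖y₁‖ ≥ τ`, simply `Q(y₁)⁴ ≲ τ⁻⁸` and `Q(y₂)² ≲ ⟨x - v₂⟩⁻⁶`. Either way the integrand is
`τ⁻⁸` times a translate of `⟨·⟩⁻¹⁰` or `⟨·⟩⁻⁶`, both integrable on `ℝ⁴`, so the `L²` norm is
`O(τ⁻⁴) = O(t⁻⁴)`.
-/

noncomputable section

open MeasureTheory

theorem integrable_inv_one_add_norm_sq_pow {E : Type*} [NormedAddCommGroup E]
    [InnerProductSpace ℝ E] [FiniteDimensional ℝ E] [MeasurableSpace E] [BorelSpace E]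
    (μ : Measure E) [μ.IsAddHaarMeasure] {k : ℕ} (hk : Module.finrank ℝ E < 2 * k) :
    Integrable (fun x : E => ((1 + ‖x‖ ^ 2) ^ k)⁻¹) μ := by
  have hr : (Module.finrank ℝ E : ℝ) < 2 * k := by exact_mod_cast hk
  convert integrable_rpow_neg_one_add_norm_sq (μ := μ) hr using 2 with x
  rw [show -(2 * (k : ℝ)) / 2 = -k by ring, Real.rpow_neg (by positivity), Real.rpow_natCast]

theorem integral_le_of_le_add_translates {G : Type*} [AddGroup G] [MeasurableSpace G]
    [MeasurableAdd G] {μ : Measure G} [μ.IsAddRightInvariant] {F g₁ g₂ : G → ℝ}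
    (hg₁ : Integrable g₁ μ) (hg₂ : Integrable g₂ μ) (K₁ K₂ : ℝ) (v₁ v₂ : G)
    (hF₀ : ∀ x, 0 ≤ F x) (hF : ∀ x, F x ≤ K₁ * g₁ (x - v₁) + K₂ * g₂ (x - v₂)) :
    ∫ x, F x ∂μ ≤ K₁ * ∫ x, g₁ x ∂μ + K₂ * ∫ x, g₂ x ∂μ := by
  have hg₁' := (hg₁.comp_sub_right v₁).const_mul K₁
  have hg₂' := (hg₂.comp_sub_right v₂).const_mul K₂
  calc ∫ x, F x ∂μ ≤ ∫ x, K₁ * g₁ (x - v₁) + K₂ * g₂ (x - v₂) ∂μ :=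
        integral_mono_of_nonneg (.of_forall hF₀) (hg₁'.add hg₂') (.of_forall hF)
    _ = K₁ * ∫ x, g₁ x ∂μ + K₂ * ∫ x, g₂ x ∂μ := by
        rw [integral_add hg₁' hg₂', integral_const_mul, integral_const_mul,
          integral_sub_right_eq_self, integral_sub_right_eq_self]

theorem sq_le_of_abs_le_mul_japanese {E : Type*} [Norm E] {f : E → ℝ} {C : ℝ}
    (hf : ∀ y, |f y| ≤ C * Real.sqrt (1 + ‖y‖ ^ 2) ^ (-3 : ℤ)) (y : E) :
    f y ^ 2 ≤ C ^ 2 * ((1 + ‖y‖ ^ 2) ^ 3)⁻¹ := by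
  have hsq : (Real.sqrt (1 + ‖y‖ ^ 2) ^ (-3 : ℤ)) ^ 2 = ((1 + ‖y‖ ^ 2) ^ 3)⁻¹ := by
    rw [zpow_neg, zpow_ofNat, inv_pow, ← pow_mul, pow_mul', Real.sq_sqrt (by positivity)]
  calc f y ^ 2 = |f y| ^ 2 := (sq_abs _).symm
    _ ≤ (C * Real.sqrt (1 + ‖y‖ ^ 2) ^ (-3 : ℤ)) ^ 2 := pow_le_pow_left₀ (abs_nonneg _) (hf y) 2
    _ = C ^ 2 * ((1 + ‖y‖ ^ 2) ^ 3)⁻¹ := by rw [mul_pow, hsq]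

theorem abs_le_of_abs_sub_div_pow_le {Q : E4 → ℝ} {C : ℝ}
    (h : ∀ x : E4, 1 < ‖x‖ → |Q x - x 3 / ‖x‖ ^ 4| ≤ C / ‖x‖ ^ 4) {y : E4} (hy : 1 < ‖y‖) :
    |Q y| ≤ (|y 3| + C) / ‖y‖ ^ 4 := by
  have h4 : 0 < ‖y‖ ^ 4 := by positivity
  have := abs_sub_abs_le_abs_sub (Q y) (y 3 / ‖y‖ ^ 4)
  rw [abs_div, abs_of_pos h4] at this
  rw [add_div]
  linarith [h y hy]

section Boost

variable {ℓ : ℝ} (t : ℝ) (x : E4)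

theorem boost_apply_zero : boost ℓ t x 0 = (x 0 - ℓ * t) / Real.sqrt (1 - ℓ ^ 2) := rfl

theorem boost_apply_of_ne_zero {i : Fin 4} (hi : i ≠ 0) : boost ℓ t x i = x i := if_neg hi

theorem norm_sub_single_le_norm_boost (hℓ : ℓ ∈ Set.Ioo (-1 : ℝ) 1) :
    ‖x - EuclideanSpace.single 0 (ℓ * t)‖ ≤ ‖boost ℓ t x‖ := by
  have hpos : 0 < 1 - ℓ ^ 2 := by nlinarith [hℓ.1, hℓ.2]
  have hs : Real.sqrt (1 - ℓ ^ 2) ≤ 1 := Real.sqrt_le_one.2 (by linarith [sq_nonneg ℓ])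
  rw [EuclideanSpace.norm_eq, EuclideanSpace.norm_eq]
  gcongr with i
  by_cases hi : i = 0
  · subst hi
    rw [show (x - EuclideanSpace.single 0 (ℓ * t) : E4) 0 = x 0 - ℓ * t by simp,
      boost_apply_zero, Real.norm_eq_abs, Real.norm_eq_abs, abs_div,
      abs_of_pos (Real.sqrt_pos.2 hpos)]
    exact le_div_self (abs_nonneg _) (Real.sqrt_pos.2 hpos) hs
  · simp [hi, boost_apply_of_ne_zero t x hi]

theorem abs_sub_le_norm_boost (hℓ : ℓ ∈ Set.Ioo (-1 : ℝ) 1) : |x 0 - ℓ * t| ≤ ‖boost ℓ t x‖ := by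
  have h := PiLp.norm_apply_le (x - EuclideanSpace.single 0 (ℓ * t)) 0
  rw [show (x - EuclideanSpace.single 0 (ℓ * t) : E4) 0 = x 0 - ℓ * t by simp,
    Real.norm_eq_abs] at h
  exact h.trans (norm_sub_single_le_norm_boost t x hℓ)

theorem abs_apply_three_le_norm_boost : |x 3| ≤ ‖boost ℓ t x‖ := by
  simpa [boost_apply_of_ne_zero t x (show (3 : Fin 4) ≠ 0 by decide)] using
    PiLp.norm_apply_le (boost ℓ t x) 3

theorem abs_sub_mul_le_norm_boost_add {ℓ₁ ℓ₂ : ℝ} (hℓ₁ : ℓ₁ ∈ Set.Ioo (-1 : ℝ) 1)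
    (hℓ₂ : ℓ₂ ∈ Set.Ioo (-1 : ℝ) 1) :
    |(ℓ₁ - ℓ₂) * t| ≤ ‖boost ℓ₁ t x‖ + ‖boost ℓ₂ t x‖ :=
  calc |(ℓ₁ - ℓ₂) * t| = |(x 0 - ℓ₂ * t) - (x 0 - ℓ₁ * t)| := by ring_nf
    _ ≤ |x 0 - ℓ₂ * t| + |x 0 - ℓ₁ * t| := abs_sub _ _
    _ ≤ ‖boost ℓ₁ t x‖ + ‖boost ℓ₂ t x‖ := by
        linarith [abs_sub_le_norm_boost t x hℓ₁, abs_sub_le_norm_boost t x hℓ₂]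

end Boost

section Interaction

variable {Q : E4 → ℝ} {C τ ℓ₁ ℓ₂ t : ℝ}

theorem interaction_sq_le_of_le_norm_boost_right (hC : 0 ≤ C)
    (hQ : ∀ y, Q y ^ 2 ≤ C ^ 2 * ((1 + ‖y‖ ^ 2) ^ 3)⁻¹)
    (hfar : ∀ y : E4, 1 < ‖y‖ → |Q y| ≤ (|y 3| + C) / ‖y‖ ^ 4)
    (hℓ₁ : ℓ₁ ∈ Set.Ioo (-1 : ℝ) 1) (hτ : 1 < τ) {x : E4} (hx : τ ≤ ‖boost ℓ₂ t x‖) :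
    (Q (boost ℓ₁ t x) ^ 2 * Q (boost ℓ₂ t x)) ^ 2 ≤
      (τ ^ 8)⁻¹ * (C ^ 4 * (1 + C) ^ 2) *
        ((1 + ‖x - EuclideanSpace.single 0 (ℓ₁ * t)‖ ^ 2) ^ 5)⁻¹ := by
  set y₁ := boost ℓ₁ t x
  set y₂ := boost ℓ₂ t x
  have hQ₁ : Q y₁ ^ 4 ≤ (C ^ 2 * ((1 + ‖y₁‖ ^ 2) ^ 3)⁻¹) ^ 2 := by
    rw [show Q y₁ ^ 4 = (Q y₁ ^ 2) ^ 2 by ring]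
    exact pow_le_pow_left₀ (sq_nonneg _) (hQ y₁) 2
  have hx₃ : |y₂ 3| ≤ ‖y₁‖ := by
    rw [boost_apply_of_ne_zero t x (by decide)]
    exact abs_apply_three_le_norm_boost t x
  have hQ₂ : |Q y₂| ≤ (‖y₁‖ + C) / τ ^ 4 :=
    (hfar y₂ (hτ.trans_le hx)).trans (by gcongr)
  have hQ₂sq : Q y₂ ^ 2 ≤ (1 + C) ^ 2 * (1 + ‖y₁‖ ^ 2) / τ ^ 8 := by
    calc Q y₂ ^ 2 = |Q y₂| ^ 2 := (sq_abs _).symm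
      _ ≤ ((‖y₁‖ + C) / τ ^ 4) ^ 2 := pow_le_pow_left₀ (abs_nonneg _) hQ₂ 2
      _ ≤ (1 + C) ^ 2 * (1 + ‖y₁‖ ^ 2) / τ ^ 8 := by
        rw [div_pow, ← pow_mul]
        gcongr
        nlinarith [norm_nonneg y₁, sq_nonneg (C * ‖y₁‖ - 1), sq_nonneg (‖y₁‖ - C)]
  calc (Q y₁ ^ 2 * Q y₂) ^ 2 = Q y₁ ^ 4 * Q y₂ ^ 2 := by ring
    _ ≤ (C ^ 2 * ((1 + ‖y₁‖ ^ 2) ^ 3)⁻¹) ^ 2 * ((1 + C) ^ 2 * (1 + ‖y₁‖ ^ 2) / τ ^ 8) :=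
        mul_le_mul hQ₁ hQ₂sq (sq_nonneg _) (sq_nonneg _)
    _ = (τ ^ 8)⁻¹ * (C ^ 4 * (1 + C) ^ 2) * ((1 + ‖y₁‖ ^ 2) ^ 5)⁻¹ := by
        field_simp
    _ ≤ (τ ^ 8)⁻¹ * (C ^ 4 * (1 + C) ^ 2) *
          ((1 + ‖x - EuclideanSpace.single 0 (ℓ₁ * t)‖ ^ 2) ^ 5)⁻¹ := by
        gcongr
        exact norm_sub_single_le_norm_boost t x hℓ₁

theorem interaction_sq_le_of_le_norm_boost_left
    (hQ : ∀ y, Q y ^ 2 ≤ C ^ 2 * ((1 + ‖y‖ ^ 2) ^ 3)⁻¹)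
    (hℓ₂ : ℓ₂ ∈ Set.Ioo (-1 : ℝ) 1) (hτ : 0 < τ) {x : E4} (hx : τ ≤ ‖boost ℓ₁ t x‖) :
    (Q (boost ℓ₁ t x) ^ 2 * Q (boost ℓ₂ t x)) ^ 2 ≤
      (τ ^ 8)⁻¹ * C ^ 6 * ((1 + ‖x - EuclideanSpace.single 0 (ℓ₂ * t)‖ ^ 2) ^ 3)⁻¹ := by
  set y₁ := boost ℓ₁ t x
  set y₂ := boost ℓ₂ t x
  have hτu : τ ^ 8 ≤ ((1 + ‖y₁‖ ^ 2) ^ 3) ^ 2 :=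
    calc τ ^ 8 = (τ ^ 2) ^ 4 := by ring
      _ ≤ (1 + ‖y₁‖ ^ 2) ^ 4 := by
        gcongr
        nlinarith
      _ ≤ ((1 + ‖y₁‖ ^ 2) ^ 3) ^ 2 := by
        rw [← pow_mul]
        exact pow_le_pow_right₀ (by linarith [sq_nonneg ‖y₁‖]) (by norm_num)
  have hQ₁ : Q y₁ ^ 4 ≤ C ^ 4 * (τ ^ 8)⁻¹ :=
    calc Q y₁ ^ 4 = (Q y₁ ^ 2) ^ 2 := by ring
      _ ≤ (C ^ 2 * ((1 + ‖y₁‖ ^ 2) ^ 3)⁻¹) ^ 2 := pow_le_pow_left₀ (sq_nonneg _) (hQ y₁) 2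
      _ = C ^ 4 * (((1 + ‖y₁‖ ^ 2) ^ 3) ^ 2)⁻¹ := by rw [mul_pow, inv_pow, ← pow_mul]
      _ ≤ C ^ 4 * (τ ^ 8)⁻¹ := by gcongr
  have hQ₂ : Q y₂ ^ 2 ≤ C ^ 2 * ((1 + ‖x - EuclideanSpace.single 0 (ℓ₂ * t)‖ ^ 2) ^ 3)⁻¹ :=
    (hQ y₂).trans (by gcongr; exact norm_sub_single_le_norm_boost t x hℓ₂)
  calc (Q y₁ ^ 2 * Q y₂) ^ 2 = Q y₁ ^ 4 * Q y₂ ^ 2 := by ring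
    _ ≤ C ^ 4 * (τ ^ 8)⁻¹ *
          (C ^ 2 * ((1 + ‖x - EuclideanSpace.single 0 (ℓ₂ * t)‖ ^ 2) ^ 3)⁻¹) :=
        mul_le_mul hQ₁ hQ₂ (sq_nonneg _) (by positivity)
    _ = (τ ^ 8)⁻¹ * C ^ 6 * ((1 + ‖x - EuclideanSpace.single 0 (ℓ₂ * t)‖ ^ 2) ^ 3)⁻¹ := by ring

theorem interaction_sq_le (hC : 0 ≤ C) (hQ : ∀ y, Q y ^ 2 ≤ C ^ 2 * ((1 + ‖y‖ ^ 2) ^ 3)⁻¹)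
    (hfar : ∀ y : E4, 1 < ‖y‖ → |Q y| ≤ (|y 3| + C) / ‖y‖ ^ 4)
    (hℓ₁ : ℓ₁ ∈ Set.Ioo (-1 : ℝ) 1) (hℓ₂ : ℓ₂ ∈ Set.Ioo (-1 : ℝ) 1) (hτ : 1 < τ)
    (hsep : 2 * τ ≤ |(ℓ₁ - ℓ₂) * t|) (x : E4) :
    (Q (boost ℓ₁ t x) ^ 2 * Q (boost ℓ₂ t x)) ^ 2 ≤
      (τ ^ 8)⁻¹ * (C ^ 4 * (1 + C) ^ 2) *
          ((1 + ‖x - EuclideanSpace.single 0 (ℓ₁ * t)‖ ^ 2) ^ 5)⁻¹ +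
        (τ ^ 8)⁻¹ * C ^ 6 * ((1 + ‖x - EuclideanSpace.single 0 (ℓ₂ * t)‖ ^ 2) ^ 3)⁻¹ := by
  rcases le_or_gt τ ‖boost ℓ₁ t x‖ with h | h
  · exact (interaction_sq_le_of_le_norm_boost_left hQ hℓ₂ (by linarith) h).trans
      (le_add_of_nonneg_left (by positivity))
  · have h₂ : τ ≤ ‖boost ℓ₂ t x‖ := by
      linarith [abs_sub_mul_le_norm_boost_add t x hℓ₁ hℓ₂]
    exact (interaction_sq_le_of_le_norm_boost_right hC hQ hfar hℓ₁ hτ h₂).trans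
      (le_add_of_nonneg_right (by positivity))

end Interaction

theorem soliton_interaction_t4_general (Q : E4 → ℝ) (C : ℝ)
    (h1 : ∀ x : E4, |Q x| ≤ C * Real.sqrt (1 + ‖x‖ ^ 2) ^ (-3 : ℤ))
    (h2 : ∀ x : E4, 1 < ‖x‖ → |Q x - x 3 / ‖x‖ ^ 4| ≤ C / ‖x‖ ^ 4)
    (ℓ₁ ℓ₂ : ℝ) (hℓ₁ : ℓ₁ ∈ Set.Ioo (-1 : ℝ) 1) (hℓ₂ : ℓ₂ ∈ Set.Ioo (-1 : ℝ) 1)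
    (hne : ℓ₁ ≠ ℓ₂) :
    ∃ T0 > 0, ∃ C' > 0, ∀ t ≥ T0,
      Real.sqrt (∫ x : E4, (Q (boost ℓ₁ t x) ^ 2 * Q (boost ℓ₂ t x)) ^ 2)
        ≤ C' * t ^ (-4 : ℤ) := by
  have hC : 0 ≤ C := by simpa using (abs_nonneg (Q 0)).trans (h1 0)
  have hδ : 0 < |ℓ₁ - ℓ₂| := abs_pos.2 (sub_ne_zero.2 hne)
  have hI₅ := integrable_inv_one_add_norm_sq_pow (volume : Measure E4) (k := 5) (by simp)
  have hI₃ := integrable_inv_one_add_norm_sq_pow (volume : Measure E4) (k := 3) (by simp)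
  set M := C ^ 4 * (1 + C) ^ 2 * (∫ x : E4, ((1 + ‖x‖ ^ 2) ^ 5)⁻¹) +
    C ^ 6 * ∫ x : E4, ((1 + ‖x‖ ^ 2) ^ 3)⁻¹
  refine ⟨4 / |ℓ₁ - ℓ₂|, by positivity, (2 / |ℓ₁ - ℓ₂|) ^ 4 * (√M + 1), by positivity,
    fun t ht => ?_⟩
  have ht₀ : 0 < t := (by positivity : (0 : ℝ) < 4 / |ℓ₁ - ℓ₂|).trans_le ht
  set τ := |ℓ₁ - ℓ₂| * t / 2 with hτ_def
  have hτ : 2 ≤ τ := by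
    rw [ge_iff_le, div_le_iff₀ hδ] at ht
    linarith
  have hsep : 2 * τ ≤ |(ℓ₁ - ℓ₂) * t| := by rw [abs_mul, abs_of_pos ht₀]; linarith
  have hint : ∫ x : E4, (Q (boost ℓ₁ t x) ^ 2 * Q (boost ℓ₂ t x)) ^ 2 ≤ ((τ ^ 4)⁻¹) ^ 2 * M :=
    (integral_le_of_le_add_translates hI₅ hI₃ _ _ _ _ (fun x => by positivity)
      (interaction_sq_le hC (sq_le_of_abs_le_mul_japanese h1)
        (fun y => abs_le_of_abs_sub_div_pow_le h2) hℓ₁ hℓ₂ (by linarith) hsep)).trans_eq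
      (by ring)
  calc √(∫ x : E4, (Q (boost ℓ₁ t x) ^ 2 * Q (boost ℓ₂ t x)) ^ 2)
      ≤ √(((τ ^ 4)⁻¹) ^ 2 * M) := Real.sqrt_le_sqrt hint
    _ = (2 / |ℓ₁ - ℓ₂|) ^ 4 * √M * t ^ (-4 : ℤ) := by
        rw [Real.sqrt_mul (sq_nonneg _), Real.sqrt_sq (by positivity), zpow_neg, zpow_ofNat,
          hτ_def]
        field_simp
    _ ≤ (2 / |ℓ₁ - ℓ₂|) ^ 4 * (√M + 1) * t ^ (-4 : ℤ) := by gcongr; linarith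

/-- Interaction of two boosted solitons with distinct collinear speeds:
`‖Q₁² Q₂‖_{L²} ≤ C' t⁻⁴`, using the refined asymptotics `Q(x) ≈ x₄/|x|⁴`. -/
theorem soliton_interaction_t4 (Q : E4 → ℝ) (hc : Continuous Q) (C : ℝ)
    (h1 : ∀ x : E4, |Q x| ≤ C * Real.sqrt (1 + ‖x‖ ^ 2) ^ (-3 : ℤ))
    (h2 : ∀ x : E4, 1 < ‖x‖ → |Q x - x 3 / ‖x‖ ^ 4| ≤ C / ‖x‖ ^ 4)
    (ℓ₁ ℓ₂ : ℝ) (hℓ₁ : ℓ₁ ∈ Set.Ioo (-1 : ℝ) 1) (hℓ₂ : ℓ₂ ∈ Set.Ioo (-1 : ℝ) 1)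
    (hne : ℓ₁ ≠ ℓ₂) :
    ∃ T0 > 0, ∃ C' > 0, ∀ t ≥ T0,
      Real.sqrt (∫ x : E4, (Q (boost ℓ₁ t x) ^ 2 * Q (boost ℓ₂ t x)) ^ 2)
        ≤ C' * t ^ (-4 : ℤ) :=
  soliton_interaction_t4_general Q C h1 h2 ℓ₁ ℓ₂ hℓ₁ hℓ₂ hne
end
end
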